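/- The one-point suspension Susp₁(v,K) is shellable if and only if K is shellable. In particular, given a shelling F₁,…,F_t of K, replacing each facet Fᵢ not containing v by the consecutive pair v'∗Fᵢ, v''∗Fᵢ and each facet Fⱼ containing v by {v',v''}∗(Fⱼ∖{v}) yields a shelling of Susp₁(v,K). -/

import Mathlib

open Finset

variable {V : Type} [DecidableEq V]

/-- `K` (a finite set of finite sets) is an abstract simplicial complex:
it contains the empty face and is closed under taking subsets. -/
def IsComplex (K : Finset (Finset V)) : Prop :=
  ∅ ∈ K ∧ ∀ s ∈ K, ∀ t ⊆ s, t ∈ K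

/-- The facets (maximal faces) of `K`. -/
def facetsOf (K : Finset (Finset V)) : Finset (Finset V) :=
  K.filter fun s => ∀ t ∈ K, s ⊆ t → s = t

/-- The vertex set of `K`. -/
def vertsOf (K : Finset (Finset V)) : Finset V := K.sup id

/-- The link of the vertex `v` in `K`. -/
def linkOf (K : Finset (Finset V)) (v : V) : Finset (Finset V) :=
  (K.filter fun s => v ∈ s).image fun s => s.erase v

/-- The deletion of the vertex `v` from `K`. -/
def delOf (K : Finset (Finset V)) (v : V) : Finset (Finset V) :=
  K.filter fun s => v ∉ s

/-- The star of the vertex `v` in `K`. -/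
def starOf (K : Finset (Finset V)) (v : V) : Finset (Finset V) :=
  K.filter fun s => v ∈ s

/-- Join of two face sets. -/
def joinF (K L : Finset (Finset V)) : Finset (Finset V) :=
  (K ×ˢ L).image fun p => p.1 ∪ p.2

/-- Image of a complex under a vertex map. -/
def mapC {W : Type} [DecidableEq W] (f : V → W) (K : Finset (Finset V)) :
    Finset (Finset W) :=
  K.image (Finset.image f)

/-- The full edge `{v', v''}` on the two new vertices `v' = Sum.inr false`,
`v'' = Sum.inr true`, as a simplicial complex. -/
def edgeC (V : Type) [DecidableEq V] : Finset (Finset (V ⊕ Bool)) :=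
  ({Sum.inr false, Sum.inr true} : Finset (V ⊕ Bool)).powerset

/-- The boundary of the edge `{v', v''}`. -/
def bedgeC (V : Type) [DecidableEq V] : Finset (Finset (V ⊕ Bool)) :=
  (edgeC V).erase {Sum.inr false, Sum.inr true}

/-- The one-point suspension of `K` at the vertex `v`:
`((∂e ∗ K) ∖ (∂e ∗ star_K(v))) ∪ (e ∗ link_K(v))` where `e = {v',v''}`. -/
def susp (v : V) (K : Finset (Finset V)) : Finset (Finset (V ⊕ Bool)) :=
  (joinF (bedgeC V) (mapC Sum.inl K) \ joinF (bedgeC V) (mapC Sum.inl (starOf K v))) ∪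
    joinF (edgeC V) (mapC Sum.inl (linkOf K v))

/-- The union of the powersets (sets of faces) of a list of facets. -/
def prefixFaces {W : Type} [DecidableEq W] (L : List (Finset W)) :
    Finset (Finset W) :=
  L.foldr (fun F acc => F.powerset ∪ acc) ∅

/-- `L` is a shelling of `K`: a linear order `F₁, …, F_t` (without repetitions) of all
facets of `K` such that for each `k ≥ 2` the complex
`(2^{F₁} ∪ … ∪ 2^{F_{k-1}}) ∩ 2^{F_k}` is pure of dimension `dim F_k - 1`, i.e. all
its maximal faces have `F_k.card - 1` vertices. -/
def IsShelling {W : Type} [DecidableEq W] (L : List (Finset W))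
    (K : Finset (Finset W)) : Prop :=
  L.Nodup ∧ L.toFinset = facetsOf K ∧
    ∀ k, (hk : k < L.length) → 0 < k →
      ∀ s ∈ facetsOf (prefixFaces (L.take k) ∩ (L.get ⟨k, hk⟩).powerset),
        s.card = (L.get ⟨k, hk⟩).card - 1

/-- `K` is shellable. -/
def Shellable {W : Type} [DecidableEq W] (K : Finset (Finset W)) : Prop :=
  ∃ L, IsShelling L K

set_option linter.unusedSectionVars false
/-! ### Auxiliary lemmas: generic complexes -/

section Generic
variable {W : Type} [DecidableEq W]

lemma mem_facetsOf {K : Finset (Finset W)} {s : Finset W} :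
    s ∈ facetsOf K ↔ s ∈ K ∧ ∀ t ∈ K, s ⊆ t → s = t := by
  simp [facetsOf]

lemma exists_facet {K : Finset (Finset W)} {s : Finset W} (hs : s ∈ K) :
    ∃ F ∈ facetsOf K, s ⊆ F := by
  obtain ⟨F, hF, hmax⟩ := (K.filter (s ⊆ ·)).exists_maximal ⟨s, by simp [hs]⟩
  simp only [mem_filter] at hF
  refine ⟨F, mem_facetsOf.2 ⟨hF.1, fun t ht hFt => ?_⟩, hF.2⟩
  by_contra hne
  exact hne (subset_antisymm hFt (hmax (by simp [ht, hF.2.trans hFt]) hFt))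

lemma exists_max_face {X : Finset (Finset W)} {s : Finset W} (hs : s ∈ X) :
    ∃ F ∈ facetsOf X, s ⊆ F := exists_facet hs

lemma mem_prefixFaces {L : List (Finset W)} {s : Finset W} :
    s ∈ prefixFaces L ↔ ∃ F ∈ L, s ⊆ F := by
  induction L with
  | nil => simp [prefixFaces]
  | cons F L ih =>
      have h : prefixFaces (F :: L) = F.powerset ∪ prefixFaces L := rfl
      rw [h, mem_union, mem_powerset, ih]
      simp

lemma prefixFaces_down {L : List (Finset W)} {s t : Finset W}
    (hs : s ∈ prefixFaces L) (hts : t ⊆ s) : t ∈ prefixFaces L := by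
  obtain ⟨F, hF, h⟩ := mem_prefixFaces.1 hs
  exact mem_prefixFaces.2 ⟨F, hF, hts.trans h⟩

end Generic

/-! ### The two suspension vertices and decomposition machinery -/

section Parts
variable {α : Type} [DecidableEq α]

/-- the edge as a finset -/
def ee (α : Type) [DecidableEq α] : Finset (α ⊕ Bool) := {Sum.inr false, Sum.inr true}

/-- cone over image with apex one of the two new vertices -/
def cb (b : Bool) (F : Finset α) : Finset (α ⊕ Bool) := insert (Sum.inr b) (F.image Sum.inl)

/-- join of the edge with (the image of) a face -/
def jB (F : Finset α) : Finset (α ⊕ Bool) := ee α ∪ F.image Sum.inl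

/-- the "left part" of a face of the suspension -/
noncomputable def lpt (s : Finset (α ⊕ Bool)) : Finset α := s.preimage Sum.inl Sum.inl_injective.injOn

@[simp] lemma mem_lp {s : Finset (α ⊕ Bool)} {a : α} : a ∈ lpt s ↔ Sum.inl a ∈ s :=
  Finset.mem_preimage

@[simp] lemma inr_mem_ee {b : Bool} : Sum.inr b ∈ ee α := by cases b <;> simp [ee]

@[simp] lemma inl_not_mem_ee {a : α} : Sum.inl a ∉ ee α := by simp [ee]

lemma ee_subset {s : Finset (α ⊕ Bool)} :
    ee α ⊆ s ↔ Sum.inr false ∈ s ∧ Sum.inr true ∈ s := by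
  simp [ee, insert_subset_iff]

@[simp] lemma lp_image {F : Finset α} : lpt (F.image Sum.inl) = F := by
  ext a; simp

@[simp] lemma lp_cb {b : Bool} {F : Finset α} : lpt (cb b F) = F := by
  ext a; simp [cb]

@[simp] lemma lp_jB {F : Finset α} : lpt (jB F) = F := by
  ext a; simp [jB, ee]

lemma lp_mono {s t : Finset (α ⊕ Bool)} (h : s ⊆ t) : lpt s ⊆ lpt t := by
  intro a ha; exact mem_lp.2 (h (mem_lp.1 ha))

lemma subset_of_parts {s t : Finset (α ⊕ Bool)}
    (h1 : ∀ b : Bool, Sum.inr b ∈ s → Sum.inr b ∈ t) (h2 : lpt s ⊆ lpt t) : s ⊆ t := by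
  intro w hw
  cases w with
  | inl a => exact mem_lp.1 (h2 (mem_lp.2 hw))
  | inr b => exact h1 b hw

lemma decomp (s : Finset (α ⊕ Bool)) : s = (s ∩ ee α) ∪ (lpt s).image Sum.inl := by
  ext w
  cases w with
  | inl a => simp
  | inr b => simp

@[simp] lemma inr_not_mem_image {b : Bool} {F : Finset α} :
    Sum.inr b ∉ F.image Sum.inl := by simp

@[simp] lemma card_ee : (ee α).card = 2 := by simp [ee]

lemma card_cb {b : Bool} {F : Finset α} : (cb b F).card = F.card + 1 := by
  rw [cb, card_insert_of_notMem (by simp), card_image_of_injective _ Sum.inl_injective]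

lemma card_jB {F : Finset α} : (jB F).card = F.card + 2 := by
  rw [jB, card_union_of_disjoint, card_ee, card_image_of_injective _ Sum.inl_injective]
  · omega
  · simp [disjoint_left, ee]
  -- might need adjusting

@[simp] lemma inr_mem_cb {b b' : Bool} {F : Finset α} :
    Sum.inr b' ∈ cb b F ↔ b' = b := by simp [cb]

@[simp] lemma inl_mem_cb {a : α} {b : Bool} {F : Finset α} :
    Sum.inl a ∈ cb b F ↔ a ∈ F := by simp [cb]

@[simp] lemma inr_mem_jB {b : Bool} {F : Finset α} : Sum.inr b ∈ jB F := by
  simp [jB]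

@[simp] lemma inl_mem_jB {a : α} {F : Finset α} : Sum.inl a ∈ jB F ↔ a ∈ F := by
  simp [jB]

lemma not_ee_subset_cb {b : Bool} {F : Finset α} : ¬ ee α ⊆ cb b F := by
  rw [ee_subset]
  cases b <;> simp

lemma subset_cb_iff {s : Finset (α ⊕ Bool)} {b : Bool} {F : Finset α} :
    s ⊆ cb b F ↔ lpt s ⊆ F ∧ ∀ b' : Bool, Sum.inr b' ∈ s → b' = b := by
  constructor
  · intro h
    refine ⟨fun a ha => ?_, fun b' hb' => ?_⟩
    · simpa using h (mem_lp.1 ha)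
    · simpa using h hb'
  · rintro ⟨h1, h2⟩
    refine subset_of_parts (fun b' hb' => ?_) (by simpa using h1)
    rw [h2 b' hb']; simp [cb]

lemma subset_jB_iff {s : Finset (α ⊕ Bool)} {F : Finset α} :
    s ⊆ jB F ↔ lpt s ⊆ F := by
  constructor
  · intro h a ha; simpa using h (mem_lp.1 ha)
  · intro h
    exact subset_of_parts (fun b hb => by simp) (by simpa using h)

end Parts

/-! ### Membership in the suspension -/

section Susp
variable {V : Type} [DecidableEq V]

lemma mem_joinF {A B : Finset (Finset V)} {s : Finset V} :
    s ∈ joinF A B ↔ ∃ a ∈ A, ∃ b ∈ B, s = a ∪ b := by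
  simp only [joinF, mem_image, Finset.mem_product, Prod.exists]
  constructor
  · rintro ⟨a, b, ⟨ha, hb⟩, rfl⟩; exact ⟨a, ha, b, hb, rfl⟩
  · rintro ⟨a, ha, b, hb, rfl⟩; exact ⟨a, b, ⟨ha, hb⟩, rfl⟩

lemma mem_bedgeC {A : Finset (V ⊕ Bool)} :
    A ∈ bedgeC V ↔ A ⊆ ee V ∧ A ≠ ee V := by
  rw [bedgeC, mem_erase, edgeC, mem_powerset, ee, and_comm]

lemma mem_edgeC {A : Finset (V ⊕ Bool)} : A ∈ edgeC V ↔ A ⊆ ee V := by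
  rw [edgeC, mem_powerset, ee]

lemma mem_mapC_inl {X : Finset (Finset V)} {B : Finset (V ⊕ Bool)} :
    B ∈ mapC Sum.inl X ↔ ∃ C ∈ X, B = C.image Sum.inl := by
  simp only [mapC, mem_image]
  constructor
  · rintro ⟨C, hC, rfl⟩; exact ⟨C, hC, rfl⟩
  · rintro ⟨C, hC, rfl⟩; exact ⟨C, hC, rfl⟩

lemma mem_linkOf {K : Finset (Finset V)} {v : V} {B : Finset V} :
    B ∈ linkOf K v ↔ v ∉ B ∧ insert v B ∈ K := by
  simp only [linkOf, mem_image, mem_filter]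
  constructor
  · rintro ⟨s, ⟨hs, hvs⟩, rfl⟩
    exact ⟨notMem_erase _ _, by rwa [insert_erase hvs]⟩
  · rintro ⟨hvB, hB⟩
    exact ⟨insert v B, ⟨hB, mem_insert_self _ _⟩, by rw [erase_insert hvB]⟩

lemma mem_joinF_bedge {X : Finset (Finset V)} {s : Finset (V ⊕ Bool)} :
    s ∈ joinF (bedgeC V) (mapC Sum.inl X) ↔ ¬ ee V ⊆ s ∧ lpt s ∈ X := by
  rw [mem_joinF]
  constructor
  · rintro ⟨a, ha, b, hb, rfl⟩
    obtain ⟨haE, haNe⟩ := mem_bedgeC.1 ha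
    obtain ⟨C, hC, rfl⟩ := mem_mapC_inl.1 hb
    have hlp : lpt (a ∪ C.image Sum.inl) = C := by
      ext x
      simp only [mem_lp, mem_union]
      constructor
      · rintro (h | h)
        · exact absurd (haE h) (by simp)
        · simpa using h
      · intro h; right; simp [h]
    refine ⟨fun hsub => haNe ?_, by rw [hlp]; exact hC⟩
    · apply Subset.antisymm haE
      intro w hw
      rcases mem_union.1 (hsub hw) with h | h
      · exact h
      · rcases w with a' | b'
        · exact absurd hw (by simp)
        · exact absurd h (by simp)
  · rintro ⟨hns, hlp⟩
    refine ⟨s ∩ ee V, mem_bedgeC.2 ⟨inter_subset_right, fun h => hns (h ▸ inter_subset_left)⟩,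
      (lpt s).image Sum.inl, mem_mapC_inl.2 ⟨lpt s, hlp, rfl⟩, decomp s⟩

lemma mem_joinF_edge {X : Finset (Finset V)} {s : Finset (V ⊕ Bool)} :
    s ∈ joinF (edgeC V) (mapC Sum.inl X) ↔ lpt s ∈ X := by
  rw [mem_joinF]
  constructor
  · rintro ⟨a, ha, b, hb, rfl⟩
    obtain ⟨C, hC, rfl⟩ := mem_mapC_inl.1 hb
    have haE := mem_edgeC.1 ha
    have hlp : lpt (a ∪ C.image Sum.inl) = C := by
      ext x
      simp only [mem_lp, mem_union]
      constructor
      · rintro (h | h)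
        · exact absurd (haE h) (by simp)
        · simpa using h
      · intro h; right; simp [h]
    rw [hlp]; exact hC
  · intro hlp
    exact ⟨s ∩ ee V, mem_edgeC.2 inter_subset_right,
      (lpt s).image Sum.inl, mem_mapC_inl.2 ⟨lpt s, hlp, rfl⟩, decomp s⟩

lemma mem_susp {K : Finset (Finset V)} {v : V} (hK : IsComplex K) {s : Finset (V ⊕ Bool)} :
    s ∈ susp v K ↔ v ∉ lpt s ∧ lpt s ∈ K ∧ (ee V ⊆ s → insert v (lpt s) ∈ K) := by
  rw [susp, mem_union, mem_sdiff, mem_joinF_bedge, mem_joinF_bedge, mem_joinF_edge,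
    mem_linkOf, starOf, mem_filter]
  constructor
  · rintro (⟨⟨hns, hmem⟩, hnot⟩ | ⟨hv, hins⟩)
    · have hvn : v ∉ lpt s := fun hv => hnot ⟨hns, hmem, hv⟩
      exact ⟨hvn, hmem, fun h => absurd h hns⟩
    · exact ⟨hv, hK.2 _ hins _ (subset_insert _ _), fun _ => hins⟩
  · rintro ⟨hv, hmem, hins⟩
    by_cases h : ee V ⊆ s
    · exact Or.inr ⟨hv, hins h⟩
    · exact Or.inl ⟨⟨h, hmem⟩, fun hh => hv hh.2.2⟩

end Susp

/-! ### Facets of the suspension -/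

section Facets
variable {V : Type} [DecidableEq V] {K : Finset (Finset V)} {v : V}

/-- The block of new facets replacing a facet `F`. -/
def blk (v : V) (F : Finset V) : List (Finset (V ⊕ Bool)) :=
  if v ∈ F then [jB (F.erase v)] else [cb false F, cb true F]

lemma mem_blk {x : Finset (V ⊕ Bool)} {F : Finset V} :
    x ∈ blk v F ↔ (v ∈ F ∧ x = jB (F.erase v)) ∨
      (v ∉ F ∧ (x = cb false F ∨ x = cb true F)) := by
  by_cases h : v ∈ F <;> simp [blk, h]

lemma facet_nonempty (hv : {v} ∈ K) {F : Finset V} (hF : F ∈ facetsOf K) :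
    F.Nonempty := by
  rcases F.eq_empty_or_nonempty with rfl | h
  · exact absurd ((mem_facetsOf.1 hF).2 {v} hv (empty_subset _)).symm (singleton_ne_empty v)
  · exact h

lemma blk_facet (hK : IsComplex K) {F : Finset V} (hF : F ∈ facetsOf K)
    {x : Finset (V ⊕ Bool)} (hx : x ∈ blk v F) : x ∈ facetsOf (susp v K) := by
  obtain ⟨hFK, hFmax⟩ := mem_facetsOf.1 hF
  rcases mem_blk.1 hx with ⟨hvF, rfl⟩ | ⟨hvF, hcb⟩
  · refine mem_facetsOf.2 ⟨(mem_susp hK).2 ⟨by simp, by rw [lp_jB]; exact hK.2 F hFK _ (erase_subset _ _), ?_⟩,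
      fun t ht hsub => ?_⟩
    · intro _; rw [lp_jB, insert_erase hvF]; exact hFK
    · obtain ⟨hvt, htK, hins⟩ := (mem_susp hK).1 ht
      have hee : ee V ⊆ t := subset_union_left.trans hsub
      have hFi : F = insert v (lpt t) := by
        apply hFmax _ (hins hee)
        rw [← insert_erase hvF]
        exact insert_subset_insert _ (by rw [← lp_jB (F := F.erase v)]; exact lp_mono hsub)
      have hlt : lpt t = F.erase v := by
        apply Subset.antisymm
        · exact subset_erase.2 ⟨hFi ▸ subset_insert _ _, hvt⟩
        · rw [← lp_jB (F := F.erase v)]; exact lp_mono hsub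
      exact Subset.antisymm hsub (subset_jB_iff.2 (by rw [hlt]))
  · have key : ∀ b : Bool, cb b F ∈ facetsOf (susp v K) := by
      intro b
      refine mem_facetsOf.2 ⟨(mem_susp hK).2 ⟨by simpa using hvF, by simpa using hFK,
        fun h => absurd h not_ee_subset_cb⟩, fun t ht hsub => ?_⟩
      obtain ⟨hvt, htK, hins⟩ := (mem_susp hK).1 ht
      have hFl : F = lpt t := hFmax _ htK (by rw [← lp_cb (b := b) (F := F)]; exact lp_mono hsub)
      have hnee : ¬ ee V ⊆ t := by
        intro hee
        have := hFmax _ (hins hee) (hFl ▸ subset_insert _ _)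
        exact hvt (hFl ▸ this ▸ mem_insert_self v _)
      refine Subset.antisymm hsub (subset_cb_iff.2 ⟨by rw [← hFl], fun b' hb' => ?_⟩)
      have hb : Sum.inr b ∈ t := hsub (by simp)
      by_contra hne
      exact hnee (ee_subset.2 (by cases b <;> cases b' <;> simp_all))
    rcases hcb with rfl | rfl
    · exact key false
    · exact key true

lemma facet_susp_iff (hK : IsComplex K) {s : Finset (V ⊕ Bool)} :
    s ∈ facetsOf (susp v K) ↔ ∃ F ∈ facetsOf K, s ∈ blk v F := by
  constructor
  · intro hs
    obtain ⟨hss, hmax⟩ := mem_facetsOf.1 hs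
    obtain ⟨hv', hsK, hins⟩ := (mem_susp hK).1 hss
    by_cases he : ee V ⊆ s
    · obtain ⟨F, hF, hsub⟩ := exists_facet (hins he)
      have hvF : v ∈ F := hsub (mem_insert_self _ _)
      have hx : jB (F.erase v) ∈ blk v F := mem_blk.2 (Or.inl ⟨hvF, rfl⟩)
      have hmem : jB (F.erase v) ∈ susp v K := (mem_facetsOf.1 (blk_facet hK hF hx)).1
      have heq : s = jB (F.erase v) :=
        hmax _ hmem (subset_jB_iff.2 (subset_erase.2 ⟨(subset_insert _ _).trans hsub, hv'⟩))
      exact ⟨F, hF, heq ▸ hx⟩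
    · obtain ⟨F, hF, hsub⟩ := exists_facet hsK
      by_cases hvF : v ∈ F
      · have hx : jB (F.erase v) ∈ blk v F := mem_blk.2 (Or.inl ⟨hvF, rfl⟩)
        have hmem : jB (F.erase v) ∈ susp v K := (mem_facetsOf.1 (blk_facet hK hF hx)).1
        have heq : s = jB (F.erase v) :=
          hmax _ hmem (subset_jB_iff.2 (subset_erase.2 ⟨hsub, hv'⟩))
        exact absurd (heq ▸ subset_union_left) he
      · set b : Bool := if Sum.inr true ∈ s then true else false with hb
        have hx : cb b F ∈ blk v F := by
          rw [mem_blk]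
          exact Or.inr ⟨hvF, by cases hbb : b <;> simp⟩
        have hmem : cb b F ∈ susp v K := (mem_facetsOf.1 (blk_facet hK hF hx)).1
        have heq : s = cb b F := by
          apply hmax _ hmem
          refine subset_cb_iff.2 ⟨hsub, fun b' hb' => ?_⟩
          cases b' with
          | true => simp [hb, hb']
          | false =>
              by_contra hne
              have : Sum.inr true ∈ s := by
                rcases hbb : b with _ | _
                · rw [hbb] at hne; simp at hne
                · rw [hb] at hbb; by_contra h; rw [if_neg h] at hbb; exact Bool.noConfusion hbb
              exact he (ee_subset.2 ⟨hb', this⟩)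
        exact ⟨F, hF, heq ▸ hx⟩
  · rintro ⟨F, hF, hx⟩
    exact blk_facet hK hF hx

end Facets

/-! ### Decomposition of positions in the flatMap list -/

section FlatMap
variable {V : Type} [DecidableEq V]

lemma flatMap_decomp (v : V) (L : List (Finset V)) :
    ∀ (k : ℕ) (hk : k < (L.flatMap (blk v)).length),
    ∃ i, ∃ hi : i < L.length,
      (v ∈ L.get ⟨i, hi⟩ ∧
        (L.flatMap (blk v)).get ⟨k, hk⟩ = jB ((L.get ⟨i, hi⟩).erase v) ∧
        (L.flatMap (blk v)).take k = (L.take i).flatMap (blk v)) ∨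
      (v ∉ L.get ⟨i, hi⟩ ∧
        (L.flatMap (blk v)).get ⟨k, hk⟩ = cb false (L.get ⟨i, hi⟩) ∧
        (L.flatMap (blk v)).take k = (L.take i).flatMap (blk v)) ∨
      (v ∉ L.get ⟨i, hi⟩ ∧
        (L.flatMap (blk v)).get ⟨k, hk⟩ = cb true (L.get ⟨i, hi⟩) ∧
        (L.flatMap (blk v)).take k =
          (L.take i).flatMap (blk v) ++ [cb false (L.get ⟨i, hi⟩)]) := by
  induction L with
  | nil => intro k hk; simp at hk
  | cons F T ih =>
      intro k hk
      have hcons : (F :: T).flatMap (blk v) = blk v F ++ T.flatMap (blk v) :=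
        List.flatMap_cons
      by_cases hvF : v ∈ F
      · have hblk : blk v F = [jB (F.erase v)] := if_pos hvF
        match k with
        | 0 =>
            refine ⟨0, by simp, Or.inl ⟨hvF, ?_, by simp⟩⟩
            rw [List.get_eq_getElem]
            simp only [hcons, hblk]
            rfl
        | (n+1) =>
            have hn : n < (T.flatMap (blk v)).length := by
              have := hk
              rw [hcons, hblk, List.length_append] at this
              simp only [List.length_flatMap] at this ⊢
              simp at this
              omega
            obtain ⟨i, hi, hcase⟩ := ih n hn
            refine ⟨i + 1, by simpa using hi, ?_⟩
            have hget : (((F :: T)).flatMap (blk v)).get ⟨n+1, hk⟩ =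
                (T.flatMap (blk v)).get ⟨n, hn⟩ := by
              rw [List.get_eq_getElem, List.get_eq_getElem]
              simp only [hcons, hblk]
              rw [List.getElem_append_right (by simp)]
              simp
            have htake : ((F :: T).flatMap (blk v)).take (n+1) =
                blk v F ++ (T.flatMap (blk v)).take n := by
              rw [hcons, hblk]
              have := List.take_append (l₁ := [jB (F.erase v)]) (l₂ := T.flatMap (blk v)) (i := n+1)
              simpa using this
            have hgeti : (F :: T).get ⟨i+1, by simpa using hi⟩ = T.get ⟨i, hi⟩ := rfl
            have htakei : ((F :: T).take (i+1)).flatMap (blk v) =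
                blk v F ++ (T.take i).flatMap (blk v) := by
              rw [List.take_succ_cons, List.flatMap_cons]
            rcases hcase with ⟨h1, h2, h3⟩ | ⟨h1, h2, h3⟩ | ⟨h1, h2, h3⟩
            · exact Or.inl ⟨by rwa [hgeti], by rw [hget, hgeti]; exact h2,
                by rw [htake, htakei, h3]⟩
            · exact Or.inr (Or.inl ⟨by rwa [hgeti], by rw [hget, hgeti]; exact h2,
                by rw [htake, htakei, h3]⟩)
            · exact Or.inr (Or.inr ⟨by rwa [hgeti], by rw [hget, hgeti]; exact h2,
                by rw [htake, htakei, h3, hgeti, List.append_assoc]⟩)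
      · have hblk : blk v F = [cb false F, cb true F] := if_neg hvF
        match k with
        | 0 =>
            refine ⟨0, by simp, Or.inr (Or.inl ⟨hvF, ?_, by simp⟩)⟩
            rw [List.get_eq_getElem]
            simp only [hcons, hblk]
            rfl
        | 1 =>
            refine ⟨0, by simp, Or.inr (Or.inr ⟨hvF, ?_, ?_⟩)⟩
            · rw [List.get_eq_getElem]
              simp only [hcons, hblk]
              rfl
            · rw [hcons, hblk]
              simp
        | (n+2) =>
            have hn : n < (T.flatMap (blk v)).length := by
              have := hk
              rw [hcons, hblk, List.length_append] at this
              simp only [List.length_flatMap] at this ⊢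
              simp at this
              omega
              
            obtain ⟨i, hi, hcase⟩ := ih n hn
            refine ⟨i + 1, by simpa using hi, ?_⟩
            have hget : (((F :: T)).flatMap (blk v)).get ⟨n+2, hk⟩ =
                (T.flatMap (blk v)).get ⟨n, hn⟩ := by
              rw [List.get_eq_getElem, List.get_eq_getElem]
              simp only [hcons, hblk]
              rw [List.getElem_append_right (by simp)]
              simp
            have htake : ((F :: T).flatMap (blk v)).take (n+2) =
                blk v F ++ (T.flatMap (blk v)).take n := by
              rw [hcons, hblk]
              have := List.take_append (l₁ := [cb false F, cb true F])
                (l₂ := T.flatMap (blk v)) (i := n+2)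
              simpa using this
            have hgeti : (F :: T).get ⟨i+1, by simpa using hi⟩ = T.get ⟨i, hi⟩ := rfl
            have htakei : ((F :: T).take (i+1)).flatMap (blk v) =
                blk v F ++ (T.take i).flatMap (blk v) := by
              rw [List.take_succ_cons, List.flatMap_cons]
            rcases hcase with ⟨h1, h2, h3⟩ | ⟨h1, h2, h3⟩ | ⟨h1, h2, h3⟩
            · exact Or.inl ⟨by rwa [hgeti], by rw [hget, hgeti]; exact h2,
                by rw [htake, htakei, h3]⟩
            · exact Or.inr (Or.inl ⟨by rwa [hgeti], by rw [hget, hgeti]; exact h2,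
                by rw [htake, htakei, h3]⟩)
            · exact Or.inr (Or.inr ⟨by rwa [hgeti], by rw [hget, hgeti]; exact h2,
                by rw [htake, htakei, h3, hgeti, List.append_assoc]⟩)

end FlatMap

/-! ### Purity in the suspension: the three cases -/

section Purity
variable {V : Type} [DecidableEq V] {K : Finset (Finset V)} {v : V}

/-- extension property of a shelling prefix -/
def EXT (T : List (Finset V)) (F : Finset V) : Prop :=
  ∀ t, t ∈ prefixFaces T → t ⊆ F →
    ∃ t', t ⊆ t' ∧ t' ∈ prefixFaces T ∧ t' ⊆ F ∧ t'.card = F.card - 1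

lemma shelling_extend {L : List (Finset V)} (hL : IsShelling L K)
    {i : ℕ} (hi : i < L.length) : EXT (L.take i) (L.get ⟨i, hi⟩) := by
  intro t ht htF
  have hipos : 0 < i := by
    rcases Nat.eq_zero_or_pos i with rfl | h
    · rw [List.take_zero] at ht
      obtain ⟨F, hF, -⟩ := mem_prefixFaces.1 ht
      exact absurd hF List.not_mem_nil
    · exact h
  have htX : t ∈ prefixFaces (L.take i) ∩ (L.get ⟨i, hi⟩).powerset :=
    mem_inter.2 ⟨ht, mem_powerset.2 htF⟩
  obtain ⟨t', ht', htt'⟩ := exists_max_face htX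
  have h1 := (mem_facetsOf.1 ht').1
  obtain ⟨h2, h3⟩ := mem_inter.1 h1
  exact ⟨t', htt', h2, mem_powerset.1 h3, hL.2.2 i hi hipos t' ht'⟩

lemma lpt_sub_of_blk {F' : Finset V} {G s : Finset (V ⊕ Bool)}
    (hG : G ∈ blk v F') (h : s ⊆ G) : lpt s ⊆ F' := by
  rcases mem_blk.1 hG with ⟨hv', rfl⟩ | ⟨hv', rfl | rfl⟩
  · exact (subset_jB_iff.1 h).trans (erase_subset _ _)
  · rw [← lp_cb (b := false) (F := F')]; exact lp_mono h
  · rw [← lp_cb (b := true) (F := F')]; exact lp_mono h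

lemma lpt_mem_prefix {T : List (Finset V)} {F' : Finset V} {G s : Finset (V ⊕ Bool)}
    (hF' : F' ∈ T) (hG : G ∈ blk v F') (h : s ⊆ G) : lpt s ∈ prefixFaces T :=
  mem_prefixFaces.2 ⟨F', hF', lpt_sub_of_blk hG h⟩

lemma cb_mem_prefix_flat {T : List (Finset V)} {t' : Finset V} {b : Bool}
    (hvt' : v ∉ t') (h : t' ∈ prefixFaces T) :
    cb b t' ∈ prefixFaces (T.flatMap (blk v)) := by
  obtain ⟨F'', hF'', hsub⟩ := mem_prefixFaces.1 h
  by_cases hvF : v ∈ F''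
  · refine mem_prefixFaces.2 ⟨jB (F''.erase v),
      List.mem_flatMap.2 ⟨F'', hF'', mem_blk.2 (Or.inl ⟨hvF, rfl⟩)⟩, ?_⟩
    rw [subset_jB_iff, lp_cb]
    exact subset_erase.2 ⟨hsub, hvt'⟩
  · refine mem_prefixFaces.2 ⟨cb b F'',
      List.mem_flatMap.2 ⟨F'', hF'', mem_blk.2 (Or.inr ⟨hvF, by cases b <;> simp⟩)⟩, ?_⟩
    rw [subset_cb_iff, lp_cb]
    exact ⟨hsub, fun b' hb' => by simpa using hb'⟩

lemma jB_mem_prefix_flat {T : List (Finset V)} {u : Finset V}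
    (hvu : v ∉ u) (h : insert v u ∈ prefixFaces T) :
    jB u ∈ prefixFaces (T.flatMap (blk v)) := by
  obtain ⟨F'', hF'', hsub⟩ := mem_prefixFaces.1 h
  have hvF : v ∈ F'' := hsub (mem_insert_self _ _)
  refine mem_prefixFaces.2 ⟨jB (F''.erase v),
    List.mem_flatMap.2 ⟨F'', hF'', mem_blk.2 (Or.inl ⟨hvF, rfl⟩)⟩, ?_⟩
  rw [subset_jB_iff, lp_jB]
  intro a ha
  have hav : a ∈ insert v u := mem_insert_of_mem ha
  have hA : a ≠ v := fun h => hvu (h ▸ ha)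
  exact mem_erase.2 ⟨hA, hsub hav⟩

lemma purity_c1 {T : List (Finset V)} {F : Finset V} (hext : EXT T F)
    (hFne : F.Nonempty) (hvF : v ∉ F) :
    ∀ s ∈ facetsOf (prefixFaces (T.flatMap (blk v)) ∩ (cb false F).powerset),
      s.card = (cb false F).card - 1 := by
  intro s hs
  obtain ⟨hsX, hmax⟩ := mem_facetsOf.1 hs
  obtain ⟨hsP, hssub⟩ := mem_inter.1 hsX
  rw [mem_powerset] at hssub
  obtain ⟨G', hG'mem, hsG'⟩ := mem_prefixFaces.1 hsP
  obtain ⟨F', hF', hG'⟩ := List.mem_flatMap.1 hG'mem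
  have hlpP : lpt s ∈ prefixFaces T := lpt_mem_prefix hF' hG' hsG'
  have hlpF : lpt s ⊆ F := by rw [← lp_cb (b := false) (F := F)]; exact lp_mono hssub
  obtain ⟨t', hsub', ht'P, ht'F, ht'card⟩ := hext _ hlpP hlpF
  have hvt' : v ∉ t' := fun h => hvF (ht'F h)
  have hS'P : cb false t' ∈ prefixFaces (T.flatMap (blk v)) := cb_mem_prefix_flat hvt' ht'P
  have hS'sub : cb false t' ⊆ cb false F :=
    subset_cb_iff.2 ⟨by rw [lp_cb]; exact ht'F, fun b' hb' => by simpa using hb'⟩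
  have hsS' : s ⊆ cb false t' := by
    refine subset_of_parts (fun b hb => ?_) (by rw [lp_cb]; exact hsub')
    have := (subset_cb_iff.1 hssub).2 b hb
    subst this
    simp [cb]
  have heq : s = cb false t' := hmax _ (mem_inter.2 ⟨hS'P, mem_powerset.2 hS'sub⟩) hsS'
  have hF1 : 1 ≤ F.card := card_pos.2 hFne
  rw [heq, card_cb, card_cb, ht'card]
  omega

lemma purity_c2 {T : List (Finset V)} {F : Finset V} (hext : EXT T F)
    (hFne : F.Nonempty) (hvF : v ∉ F) :
    ∀ s ∈ facetsOf (prefixFaces (T.flatMap (blk v) ++ [cb false F]) ∩ (cb true F).powerset),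
      s.card = (cb true F).card - 1 := by
  intro s hs
  obtain ⟨hsX, hmax⟩ := mem_facetsOf.1 hs
  obtain ⟨hsP, hssub⟩ := mem_inter.1 hsX
  rw [mem_powerset] at hssub
  have hF1 : 1 ≤ F.card := card_pos.2 hFne
  by_cases hvs : Sum.inr true ∈ s
  · obtain ⟨G', hG'mem, hsG'⟩ := mem_prefixFaces.1 hsP
    rcases List.mem_append.1 hG'mem with hG'mem | hG'mem
    · obtain ⟨F', hF', hG'⟩ := List.mem_flatMap.1 hG'mem
      have hlpP : lpt s ∈ prefixFaces T := lpt_mem_prefix hF' hG' hsG'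
      have hlpF : lpt s ⊆ F := by rw [← lp_cb (b := true) (F := F)]; exact lp_mono hssub
      obtain ⟨t', hsub', ht'P, ht'F, ht'card⟩ := hext _ hlpP hlpF
      have hvt' : v ∉ t' := fun h => hvF (ht'F h)
      have hS'P : cb true t' ∈ prefixFaces (T.flatMap (blk v) ++ [cb false F]) := by
        obtain ⟨G, hG, hsub⟩ := mem_prefixFaces.1 (cb_mem_prefix_flat (b := true) hvt' ht'P)
        exact mem_prefixFaces.2 ⟨G, List.mem_append_left _ hG, hsub⟩
      have hS'sub : cb true t' ⊆ cb true F :=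
        subset_cb_iff.2 ⟨by rw [lp_cb]; exact ht'F, fun b' hb' => by simpa using hb'⟩
      have hsS' : s ⊆ cb true t' := by
        refine subset_of_parts (fun b hb => ?_) (by rw [lp_cb]; exact hsub')
        have := (subset_cb_iff.1 hssub).2 b hb
        subst this
        simp [cb]
      have heq : s = cb true t' := hmax _ (mem_inter.2 ⟨hS'P, mem_powerset.2 hS'sub⟩) hsS'
      rw [heq, card_cb, card_cb, ht'card]
      omega
    · exfalso
      simp only [List.mem_singleton] at hG'mem
      subst hG'mem
      exact absurd ((subset_cb_iff.1 hsG').2 true hvs) (by simp)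
  · have hsub : s ⊆ F.image Sum.inl := by
      intro w hw
      cases w with
      | inl a =>
          have : a ∈ lpt s := mem_lp.2 hw
          have : a ∈ F := by
            have h := lp_mono hssub this
            rwa [lp_cb] at h
          simp [this]
      | inr b =>
          have := (subset_cb_iff.1 hssub).2 b hw
          subst this
          exact absurd hw hvs
    have hFX : F.image Sum.inl ∈ prefixFaces (T.flatMap (blk v) ++ [cb false F]) := by
      refine mem_prefixFaces.2 ⟨cb false F, List.mem_append_right _ (by simp), ?_⟩
      exact subset_insert _ _
    have heq : s = F.image Sum.inl := by
      apply hmax _ (mem_inter.2 ⟨hFX, mem_powerset.2 (subset_insert _ _)⟩) hsub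
    rw [heq, card_image_of_injective _ Sum.inl_injective, card_cb]
    omega

lemma purity_j {T : List (Finset V)} {F : Finset V} (hext : EXT T F)
    (hvF : v ∈ F) :
    ∀ s ∈ facetsOf (prefixFaces (T.flatMap (blk v)) ∩ (jB (F.erase v)).powerset),
      s.card = (jB (F.erase v)).card - 1 := by
  intro s hs
  obtain ⟨hsX, hmax⟩ := mem_facetsOf.1 hs
  obtain ⟨hsP, hssub⟩ := mem_inter.1 hsX
  rw [mem_powerset] at hssub
  have hF1 : 1 ≤ F.card := card_pos.2 ⟨v, hvF⟩
  have hlpE : lpt s ⊆ F.erase v := by rw [← lp_jB (F := F.erase v)]; exact lp_mono hssub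
  have hvlp : v ∉ lpt s := fun h => (mem_erase.1 (hlpE h)).1 rfl
  have hcardE : (F.erase v).card = F.card - 1 := card_erase_of_mem hvF
  obtain ⟨G', hG'mem, hsG'⟩ := mem_prefixFaces.1 hsP
  obtain ⟨F', hF', hG'⟩ := List.mem_flatMap.1 hG'mem
  by_cases hee : ee V ⊆ s
  · have hG'j : v ∈ F' ∧ G' = jB (F'.erase v) := by
      rcases mem_blk.1 hG' with h | ⟨-, rfl | rfl⟩
      · exact h
      · exact absurd (hee.trans hsG') not_ee_subset_cb
      · exact absurd (hee.trans hsG') not_ee_subset_cb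
    obtain ⟨hvF', rfl⟩ := hG'j
    have hlpF' : lpt s ⊆ F'.erase v := by rw [← lp_jB (F := F'.erase v)]; exact lp_mono hsG'
    have hinsP : insert v (lpt s) ∈ prefixFaces T := by
      refine mem_prefixFaces.2 ⟨F', hF', insert_subset hvF' (hlpF'.trans (erase_subset _ _))⟩
    have hinsF : insert v (lpt s) ⊆ F := insert_subset hvF (hlpE.trans (erase_subset _ _))
    obtain ⟨t', hsub', ht'P, ht'F, ht'card⟩ := hext _ hinsP hinsF
    have hvt' : v ∈ t' := hsub' (mem_insert_self _ _)
    have hS'P : jB (t'.erase v) ∈ prefixFaces (T.flatMap (blk v)) := by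
      apply jB_mem_prefix_flat (notMem_erase _ _)
      rwa [insert_erase hvt']
    have hS'sub : jB (t'.erase v) ⊆ jB (F.erase v) := by
      rw [subset_jB_iff, lp_jB]
      exact erase_subset_erase _ ht'F
    have hsS' : s ⊆ jB (t'.erase v) := by
      refine subset_of_parts (fun b hb => by simp) ?_
      rw [lp_jB]
      exact subset_erase.2 ⟨(subset_insert _ _).trans hsub', hvlp⟩
    have heq : s = jB (t'.erase v) := hmax _ (mem_inter.2 ⟨hS'P, mem_powerset.2 hS'sub⟩) hsS'
    have ht'1 : 1 ≤ t'.card := card_pos.2 ⟨v, hvt'⟩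
    rw [heq, card_jB, card_jB, card_erase_of_mem hvt', hcardE, ht'card]
    omega
  · have hlpP : lpt s ∈ prefixFaces T := lpt_mem_prefix hF' hG' hsG'
    by_cases hins : insert v (lpt s) ∈ prefixFaces T
    · exfalso
      have hS'P : jB (lpt s) ∈ prefixFaces (T.flatMap (blk v)) := jB_mem_prefix_flat hvlp hins
      have hS'sub : jB (lpt s) ⊆ jB (F.erase v) := subset_jB_iff.2 (by rw [lp_jB]; exact hlpE)
      have hsS' : s ⊆ jB (lpt s) :=
        subset_of_parts (fun b hb => by simp) (by rw [lp_jB])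
      have heq : s = jB (lpt s) := hmax _ (mem_inter.2 ⟨hS'P, mem_powerset.2 hS'sub⟩) hsS'
      exact hee (heq ▸ subset_union_left)
    · obtain ⟨t', hsub', ht'P, ht'F, ht'card⟩ :=
        hext _ hlpP (hlpE.trans (erase_subset _ _))
      by_cases hvt' : v ∈ t'
      · exact absurd (prefixFaces_down ht'P (insert_subset hvt' hsub')) hins
      · set b : Bool := if Sum.inr true ∈ s then true else false with hbdef
        have hS'P : cb b t' ∈ prefixFaces (T.flatMap (blk v)) := cb_mem_prefix_flat hvt' ht'P
        have hS'sub : cb b t' ⊆ jB (F.erase v) := by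
          rw [subset_jB_iff, lp_cb]
          exact subset_erase.2 ⟨ht'F, hvt'⟩
        have hsS' : s ⊆ cb b t' := by
          refine subset_of_parts (fun b' hb' => ?_) (by rw [lp_cb]; exact hsub')
          have hbb : b' = b := by
            cases b' with
            | true => simp [hbdef, hb']
            | false =>
                by_contra hne
                have hbt : b = true := by
                  cases hb2 : b
                  · exact absurd hb2.symm (by simpa using hne)
                  · rfl
                have : Sum.inr true ∈ s := by
                  rw [hbdef] at hbt
                  by_contra h
                  rw [if_neg h] at hbt
                  exact Bool.noConfusion hbt
                exact hee (ee_subset.2 ⟨hb', this⟩)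
          rw [hbb]
          simp [cb]
        have heq : s = cb b t' := hmax _ (mem_inter.2 ⟨hS'P, mem_powerset.2 hS'sub⟩) hsS'
        rw [heq, card_cb, card_jB, hcardE, ht'card]
        omega

end Purity

/-! ### The forward direction: the flatMap list is a shelling of the suspension -/

section Forward
variable {V : Type} [DecidableEq V] {K : Finset (Finset V)} {v : V}

/-- the retraction sending a face of the suspension to a face of `K` -/
noncomputable def psi (v : V) (s : Finset (V ⊕ Bool)) : Finset V :=
  if ee V ⊆ s then insert v (lpt s) else lpt s

lemma psi_blk {F : Finset V} {x : Finset (V ⊕ Bool)} (hx : x ∈ blk v F) :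
    psi v x = F := by
  rcases mem_blk.1 hx with ⟨hvF, rfl⟩ | ⟨hvF, rfl | rfl⟩
  · rw [psi, if_pos (show ee V ⊆ jB (F.erase v) from subset_union_left), lp_jB, insert_erase hvF]
  · rw [psi, if_neg not_ee_subset_cb, lp_cb]
  · rw [psi, if_neg not_ee_subset_cb, lp_cb]

lemma blk_nodup (F : Finset V) : (blk v F).Nodup := by
  by_cases hvF : v ∈ F
  · rw [blk, if_pos hvF]
    exact List.nodup_singleton _
  · rw [blk, if_neg hvF]
    refine List.nodup_cons.2 ⟨?_, List.nodup_singleton _⟩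
    intro h
    simp only [List.mem_singleton] at h
    have : Sum.inr false ∈ cb true F := h ▸ (by simp [cb])
    simp at this

lemma flatMap_nodup {L : List (Finset V)} (hL : L.Nodup) :
    (L.flatMap (blk v)).Nodup := by
  induction L with
  | nil => simp
  | cons F T ih =>
      rw [List.flatMap_cons]
      obtain ⟨hF, hT⟩ := List.nodup_cons.1 hL
      refine (blk_nodup F).append (ih hT) ?_
      intro x hx hx'
      obtain ⟨F', hF', hxF'⟩ := List.mem_flatMap.1 hx'
      have h1 : F = F' := (psi_blk hx).symm.trans (psi_blk hxF')
      exact hF (h1 ▸ hF')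

lemma forward_shelling (hK : IsComplex K) (hv : {v} ∈ K) {L : List (Finset V)}
    (hL : IsShelling L K) : IsShelling (L.flatMap (blk v)) (susp v K) := by
  refine ⟨flatMap_nodup hL.1, ?_, ?_⟩
  · ext x
    rw [List.mem_toFinset, List.mem_flatMap, facet_susp_iff hK]
    constructor
    · rintro ⟨F, hF, hx⟩
      exact ⟨F, by rw [← hL.2.1]; exact List.mem_toFinset.2 hF, hx⟩
    · rintro ⟨F, hF, hx⟩
      exact ⟨F, List.mem_toFinset.1 (hL.2.1 ▸ hF), hx⟩
  · intro k hk hkpos s hs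
    obtain ⟨i, hi, hcase⟩ := flatMap_decomp v L k hk
    have hFfacet : L.get ⟨i, hi⟩ ∈ facetsOf K := by
      rw [← hL.2.1]
      exact List.mem_toFinset.2 (L.get_mem _)
    have hFne : (L.get ⟨i, hi⟩).Nonempty := facet_nonempty hv hFfacet
    have hext := shelling_extend (K := K) hL hi
    rcases hcase with ⟨hvF, h2, h3⟩ | ⟨hvF, h2, h3⟩ | ⟨hvF, h2, h3⟩
    · rw [h3, h2] at hs
      rw [h2]
      exact purity_j hext hvF s hs
    · rw [h3, h2] at hs
      rw [h2]
      exact purity_c1 hext hFne hvF s hs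
    · rw [h3, h2] at hs
      rw [h2]
      exact purity_c2 hext hFne hvF s hs

end Forward

/-! ### first-occurrence dedup -/

section Fdedup
variable {α : Type} [DecidableEq α]

/-- dedup keeping the first occurrence of each element -/
def fdedup : List α → List α
  | [] => []
  | a :: l => a :: fdedup (l.filter (· ≠ a))
termination_by l => l.length
decreasing_by
  exact Nat.lt_succ_of_le (by simpa using List.length_filter_le _ l.attach)

@[simp] lemma fdedup_nil : (fdedup ([] : List α)) = [] := by rw [fdedup]

lemma fdedup_cons (a : α) (l : List α) :
    fdedup (a :: l) = a :: fdedup (l.filter (· ≠ a)) := by rw [fdedup]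

lemma mem_fdedup : ∀ (l : List α) (x : α), x ∈ fdedup l ↔ x ∈ l
  | [], x => by simp
  | a :: l, x => by
      rw [fdedup_cons, List.mem_cons, mem_fdedup (l.filter (· ≠ a)) x, List.mem_filter]
      constructor
      · rintro (rfl | ⟨h, -⟩)
        · exact List.mem_cons_self
        · exact List.mem_cons_of_mem _ h
      · intro h
        rcases List.mem_cons.1 h with rfl | h
        · exact Or.inl rfl
        · by_cases hxa : x = a
          · exact Or.inl hxa
          · exact Or.inr ⟨h, by simpa using hxa⟩
termination_by l => l.length
decreasing_by
  exact Nat.lt_succ_of_le (List.length_filter_le _ _)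

lemma nodup_fdedup : ∀ l : List α, (fdedup l).Nodup
  | [] => by simp
  | a :: l => by
      rw [fdedup_cons]
      refine List.nodup_cons.2 ⟨fun h => ?_, nodup_fdedup (l.filter (· ≠ a))⟩
      have := (mem_fdedup _ _).1 h
      rw [List.mem_filter] at this
      simpa using this.2
termination_by l => l.length
decreasing_by
  exact Nat.lt_succ_of_le (List.length_filter_le _ _)

lemma not_mem_take_indexOf (l : List α) (x : α) : x ∉ l.take (l.idxOf x) := by
  induction l with
  | nil => simp
  | cons b r ih =>
      by_cases hbx : x = b
      · subst hbx
        rw [List.idxOf_cons_self]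
        simp
      · rw [List.idxOf_cons_ne _ (fun h => hbx h.symm), Nat.succ_eq_add_one,
          List.take_succ_cons]
        intro h
        rcases List.mem_cons.1 h with h | h
        · exact hbx h
        · exact ih h

lemma filter_take_indexOf {p : α → Bool} :
    ∀ (l : List α) (y : α), y ∈ l → p y = true → ∀ x,
      (x ∈ (l.filter p).take ((l.filter p).idxOf y) ↔
        x ∈ l.take (l.idxOf y) ∧ p x = true) := by
  intro l
  induction l with
  | nil => intro y hy; simp at hy
  | cons b r ih =>
      intro y hy hpy x
      by_cases hpb : p b = true
      · rw [List.filter_cons_of_pos hpb]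
        by_cases hby : b = y
        · subst hby
          rw [List.idxOf_cons_self, List.idxOf_cons_self]
          simp
        · have hyr : y ∈ r := by
            rcases List.mem_cons.1 hy with h | h
            · exact absurd h.symm hby
            · exact h
          rw [List.idxOf_cons_ne _ hby, List.idxOf_cons_ne _ hby,
            Nat.succ_eq_add_one, Nat.succ_eq_add_one, List.take_succ_cons,
            List.take_succ_cons, List.mem_cons, List.mem_cons, ih y hyr hpy x]
          constructor
          · rintro (rfl | ⟨h1, h2⟩)
            · exact ⟨Or.inl rfl, hpb⟩
            · exact ⟨Or.inr h1, h2⟩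
          · rintro ⟨rfl | h1, h2⟩
            · exact Or.inl rfl
            · exact Or.inr ⟨h1, h2⟩
      · have hby : b ≠ y := fun h => hpb (h ▸ hpy)
        have hyr : y ∈ r := by
          rcases List.mem_cons.1 hy with h | h
          · exact absurd h.symm hby
          · exact h
        rw [List.filter_cons_of_neg (by simpa using hpb),
          List.idxOf_cons_ne _ hby, Nat.succ_eq_add_one, List.take_succ_cons,
          List.mem_cons, ih y hyr hpy x]
        constructor
        · rintro ⟨h1, h2⟩
          exact ⟨Or.inr h1, h2⟩
        · rintro ⟨rfl | h1, h2⟩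
          · exact absurd h2 (by simpa using hpb)
          · exact ⟨h1, h2⟩

lemma mem_take_fdedup :
    ∀ (l : List α) (k : ℕ) (hk : k < (fdedup l).length) (x : α),
      (x ∈ (fdedup l).take k ↔ x ∈ l.take (l.idxOf ((fdedup l)[k]'hk)))
  | [], k, hk, x => by simp at hk
  | a :: l, k, hk, x => by
      have hk' : k < (a :: fdedup (l.filter (· ≠ a))).length := by
        rwa [fdedup_cons] at hk
      have hget : (fdedup (a :: l))[k]'hk = (a :: fdedup (l.filter (· ≠ a)))[k]'hk' := by
        congr 1
        exact fdedup_cons a l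
      rw [hget]
      have htk : (fdedup (a :: l)).take k = (a :: fdedup (l.filter (· ≠ a))).take k := by
        rw [fdedup_cons]
      rw [htk]
      match k, hk' with
      | 0, hk' =>
          simp [List.idxOf_cons_self]
      | (k+1), hk' =>
          have hk'' : k < (fdedup (l.filter (· ≠ a))).length := by
            simpa using hk'
          set y := (fdedup (l.filter (· ≠ a)))[k]'hk'' with hy
          have hyget : (a :: fdedup (l.filter (· ≠ a)))[k+1]'hk' = y :=
            List.getElem_cons_succ _ _ _ _
          rw [hyget]
          have hymem : y ∈ l.filter (· ≠ a) :=
            (mem_fdedup _ _).1 (List.getElem_mem _)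
          rw [List.mem_filter] at hymem
          have hya : y ≠ a := by simpa using hymem.2
          rw [List.idxOf_cons_ne _ (fun h => hya h.symm), Nat.succ_eq_add_one,
            List.take_succ_cons, List.take_succ_cons, List.mem_cons, List.mem_cons,
            mem_take_fdedup (l.filter (· ≠ a)) k hk'' x,
            filter_take_indexOf l y hymem.1 (by simpa using hya) x]
          by_cases hxa : x = a
          · simp [hxa]
          · simp [hxa]
termination_by l => l.length
decreasing_by
  exact Nat.lt_succ_of_le (List.length_filter_le _ _)

end Fdedup

/-! ### The reverse direction -/

section Reverse
variable {V : Type} [DecidableEq V] {K : Finset (Finset V)} {v : V}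

lemma image_inl_subset_blk {s F' : Finset V} {G' : Finset (V ⊕ Bool)}
    (hG' : G' ∈ blk v F') (hs : s ⊆ F') (hvs : v ∉ s) : s.image Sum.inl ⊆ G' := by
  rcases mem_blk.1 hG' with ⟨hvF, rfl⟩ | ⟨hvF, rfl | rfl⟩
  · rw [subset_jB_iff, lp_image]
    exact subset_erase.2 ⟨hs, hvs⟩
  · rw [subset_cb_iff, lp_image]
    exact ⟨hs, fun b' hb' => absurd hb' (by simp)⟩
  · rw [subset_cb_iff, lp_image]
    exact ⟨hs, fun b' hb' => absurd hb' (by simp)⟩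

lemma jB_erase_subset_blk {s F' : Finset V} {G' : Finset (V ⊕ Bool)}
    (hG' : G' ∈ blk v F') (hs : s ⊆ F') (hvs : v ∈ s) : jB (s.erase v) ⊆ G' := by
  rcases mem_blk.1 hG' with ⟨hvF, rfl⟩ | ⟨hvF, rfl | rfl⟩
  · rw [subset_jB_iff, lp_jB]
    exact erase_subset_erase _ hs
  · exact absurd (hs hvs) hvF
  · exact absurd (hs hvs) hvF

lemma reverse_shelling (hK : IsComplex K) (hv : {v} ∈ K)
    {L' : List (Finset (V ⊕ Bool))} (hL' : IsShelling L' (susp v K)) :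
    IsShelling (fdedup (L'.map (psi v))) K := by
  set M : List (Finset V) := L'.map (psi v) with hMdef
  have hfacet' : ∀ x ∈ L', x ∈ facetsOf (susp v K) := by
    intro x hx
    rw [← hL'.2.1]
    exact List.mem_toFinset.2 hx
  have hblk' : ∀ x ∈ L', x ∈ blk v (psi v x) ∧ psi v x ∈ facetsOf K := by
    intro x hx
    obtain ⟨F, hF, hxF⟩ := (facet_susp_iff hK).1 (hfacet' x hx)
    rw [psi_blk hxF]
    exact ⟨hxF, hF⟩
  refine ⟨nodup_fdedup M, ?_, ?_⟩
  · ext F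
    rw [List.mem_toFinset, mem_fdedup]
    constructor
    · intro hF
      obtain ⟨x, hx, rfl⟩ := List.mem_map.1 hF
      exact (hblk' x hx).2
    · intro hF
      have hxblk : (if v ∈ F then jB (F.erase v) else cb false F) ∈ blk v F := by
        by_cases h : v ∈ F <;> simp [blk, h]
      have hxfacet := blk_facet hK hF hxblk
      have hxL' : (if v ∈ F then jB (F.erase v) else cb false F) ∈ L' := by
        rw [← List.mem_toFinset, hL'.2.1]
        exact hxfacet
      exact List.mem_map.2 ⟨_, hxL', psi_blk hxblk⟩
  · intro k hk hkpos s hs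
    set F := (fdedup M).get ⟨k, hk⟩ with hF
    have hFg : (fdedup M)[k]'hk = F := by rw [hF, List.get_eq_getElem]
    have hFmem : F ∈ M := (mem_fdedup M F).1 (by rw [hF]; exact List.get_mem _ _)
    set m := M.idxOf F with hm
    have hmlen : m < M.length := List.idxOf_lt_length_iff.2 hFmem
    have hmlen' : m < L'.length := by
      have := hmlen
      rwa [hMdef, List.length_map] at this
    have hMm : M[m]'hmlen = F := List.getElem_idxOf hmlen
    have htake : ∀ x, x ∈ (fdedup M).take k ↔ x ∈ M.take m := by
      intro x
      have := mem_take_fdedup M k hk x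
      rwa [hFg] at this
    set G := L'.get ⟨m, hmlen'⟩ with hG
    have h1 : M[m]'hmlen = psi v (L'[m]'hmlen') := by
      simp only [hMdef, List.getElem_map]
    have hpsiG : psi v G = F := by
      rw [hG, List.get_eq_getElem, ← h1, hMm]
    have hGL' : G ∈ L' := List.get_mem _ _
    have hGblk : G ∈ blk v F := by
      have h := (hblk' G hGL').1
      rwa [hpsiG] at h
    have hFfacetK : F ∈ facetsOf K := by
      have := (hblk' G hGL').2
      rwa [hpsiG] at this
    have hFne := facet_nonempty hv hFfacetK
    have hF1 : 1 ≤ F.card := card_pos.2 hFne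
    have hFnotin : F ∉ M.take m := not_mem_take_indexOf M F
    have hm0 : 0 < m := by
      rcases Nat.eq_zero_or_pos m with h0 | h
      · exfalso
        have hne : (fdedup M).take k ≠ [] := by
          have hlen : ((fdedup M).take k).length = min k (fdedup M).length :=
            List.length_take
          intro h
          rw [h] at hlen
          simp only [List.length_nil] at hlen
          omega
        obtain ⟨x, hx⟩ := List.exists_mem_of_ne_nil _ hne
        have := (htake x).1 hx
        rw [h0] at this
        simp at this
      · exact h
    obtain ⟨hsX, hmax⟩ := mem_facetsOf.1 hs
    obtain ⟨hsP, hsF'⟩ := mem_inter.1 hsX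
    have hsF : s ⊆ F := mem_powerset.1 hsF'
    have hMtake : M.take m = (L'.take m).map (psi v) := by
      rw [hMdef, List.map_take]
    have hprefix : ∀ t : Finset V,
        t ∈ prefixFaces ((fdedup M).take k) ↔ ∃ G' ∈ L'.take m, t ⊆ psi v G' := by
      intro t
      rw [mem_prefixFaces]
      constructor
      · rintro ⟨F', hF', htF'⟩
        have hmem : F' ∈ M.take m := (htake F').1 hF'
        rw [hMtake] at hmem
        obtain ⟨G', hG', rfl⟩ := List.mem_map.1 hmem
        exact ⟨G', hG', htF'⟩
      · rintro ⟨G', hG', htG'⟩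
        refine ⟨psi v G', (htake _).2 ?_, htG'⟩
        rw [hMtake]
        exact List.mem_map_of_mem hG'
    have hblkL' : ∀ G' ∈ L'.take m, G' ∈ blk v (psi v G') ∧ psi v G' ∈ facetsOf K :=
      fun G' hG' => hblk' G' (List.take_subset _ _ hG')
    have hext' : EXT (L'.take m) G := shelling_extend hL' hmlen'
    have hdownK : ∀ x : Finset (V ⊕ Bool), x ∈ prefixFaces (L'.take m) →
        lpt x ∈ prefixFaces ((fdedup M).take k) := by
      intro x hx
      obtain ⟨G', hG', hxG'⟩ := mem_prefixFaces.1 hx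
      exact (hprefix _).2 ⟨G', hG', lpt_sub_of_blk (hblkL' G' hG').1 hxG'⟩
    obtain ⟨G₀, hG₀, hsG₀⟩ := (hprefix s).1 hsP
    by_cases hvF : v ∈ F
    · -- `F` contains `v`; `G = jB (F.erase v)`
      have hGj : G = jB (F.erase v) := by
        rcases mem_blk.1 hGblk with ⟨-, h⟩ | ⟨hnv, -⟩
        · exact h
        · exact absurd hvF hnv
      have hhat : ∃ t : Finset (V ⊕ Bool), t ∈ prefixFaces (L'.take m) ∧ t ⊆ G ∧
          (∀ a ∈ s, a ≠ v → Sum.inl a ∈ t) ∧ (v ∈ s → ee V ⊆ t) := by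
        by_cases hvs : v ∈ s
        · refine ⟨jB (s.erase v),
            mem_prefixFaces.2 ⟨G₀, hG₀, jB_erase_subset_blk (hblkL' G₀ hG₀).1 hsG₀ hvs⟩,
            ?_, fun a ha hav => ?_, fun _ => subset_union_left⟩
          · rw [hGj, subset_jB_iff, lp_jB]
            exact erase_subset_erase _ hsF
          · exact inl_mem_jB.2 (mem_erase.2 ⟨hav, ha⟩)
        · refine ⟨s.image Sum.inl,
            mem_prefixFaces.2 ⟨G₀, hG₀, image_inl_subset_blk (hblkL' G₀ hG₀).1 hsG₀ hvs⟩,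
            image_inl_subset_blk hGblk hsF hvs, fun a ha hav => mem_image_of_mem _ ha,
            fun h => absurd h hvs⟩
      obtain ⟨sh, hshP, hshG, hshl, hshe⟩ := hhat
      obtain ⟨ts, hsub', htsP, htsG, htscard⟩ := hext' sh hshP hshG
      have hcardG : G.card = F.card + 1 := by
        rw [hGj, card_jB, card_erase_of_mem hvF]
        omega
      have htsc : ts.card = F.card := by rw [htscard, hcardG]; omega
      have htssub : lpt ts ⊆ F.erase v := by
        have := lp_mono htsG
        rwa [hGj, lp_jB] at this
      have hvlpt : v ∉ lpt ts := fun h => (mem_erase.1 (htssub h)).1 rfl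
      obtain ⟨G₂, hG₂, htsG₂⟩ := mem_prefixFaces.1 htsP
      by_cases heet : ee V ⊆ ts
      · have htseq : ts = jB (lpt ts) := by
          apply Subset.antisymm
          · intro w hw
            cases w with
            | inl a => exact inl_mem_jB.2 (mem_lp.2 hw)
            | inr b => exact inr_mem_jB
          · refine union_subset heet ?_
            intro w hw
            obtain ⟨a, ha, rfl⟩ := mem_image.1 hw
            exact mem_lp.1 ha
        have hcts : ts.card = (lpt ts).card + 2 := by
          conv_lhs => rw [htseq]
          exact card_jB
        -- G₂ is of join type
        have hG₂j : v ∈ psi v G₂ ∧ G₂ = jB ((psi v G₂).erase v) := by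
          rcases mem_blk.1 (hblkL' G₂ hG₂).1 with h | ⟨-, h | h⟩
          · exact h
          · exact absurd (h ▸ (heet.trans htsG₂)) not_ee_subset_cb
          · exact absurd (h ▸ (heet.trans htsG₂)) not_ee_subset_cb
        have hlpt₂ : lpt ts ⊆ (psi v G₂).erase v := by
          have := lp_mono htsG₂
          rwa [hG₂j.2, lp_jB] at this
        have htP : insert v (lpt ts) ∈ prefixFaces ((fdedup M).take k) :=
          (hprefix _).2 ⟨G₂, hG₂,
            insert_subset hG₂j.1 (hlpt₂.trans (erase_subset _ _))⟩
        have htF : insert v (lpt ts) ⊆ F :=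
          insert_subset hvF (htssub.trans (erase_subset _ _))
        have hst : s ⊆ insert v (lpt ts) := by
          intro a ha
          by_cases hav : a = v
          · exact hav ▸ mem_insert_self _ _
          · exact mem_insert_of_mem (mem_lp.2 (hsub' (hshl a ha hav)))
        have heq : s = insert v (lpt ts) :=
          hmax _ (mem_inter.2 ⟨htP, mem_powerset.2 htF⟩) hst
        rw [heq, card_insert_of_notMem hvlpt]
        omega
      · have hvs : v ∉ s := fun hvs => heet ((hshe hvs).trans hsub')
        have hceq : lpt ts = F.erase v := by
          have h1 : ts.card ≤ (ts ∩ ee V).card + (lpt ts).card := by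
            calc ts.card = ((ts ∩ ee V) ∪ (lpt ts).image Sum.inl).card := by rw [← decomp]
            _ ≤ (ts ∩ ee V).card + ((lpt ts).image Sum.inl).card := card_union_le _ _
            _ = (ts ∩ ee V).card + (lpt ts).card := by
                rw [card_image_of_injective _ Sum.inl_injective]
          have h2 : (ts ∩ ee V).card ≤ 1 := by
            by_contra h
            push_neg at h
            have hee2 : (ee V : Finset (V ⊕ Bool)).card ≤ (ts ∩ ee V).card := by
              rw [card_ee]; omega
            have := eq_of_subset_of_card_le inter_subset_right hee2
            exact heet (this ▸ inter_subset_left)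
          have h3 : (lpt ts).card ≤ (F.erase v).card := card_le_card htssub
          have h4 : (F.erase v).card = F.card - 1 := card_erase_of_mem hvF
          exact eq_of_subset_of_card_le htssub (by omega)
        have hFeP : F.erase v ∈ prefixFaces ((fdedup M).take k) := by
          have := hdownK ts htsP
          rwa [hceq] at this
        have hst : s ⊆ F.erase v := subset_erase.2 ⟨hsF, hvs⟩
        have heq : s = F.erase v :=
          hmax _ (mem_inter.2 ⟨hFeP, mem_powerset.2 (erase_subset _ _)⟩) hst
        rw [heq, card_erase_of_mem hvF]
    · -- `v ∉ F`; `G = cb b F`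
      have hGcb : ∃ b, G = cb b F := by
        rcases mem_blk.1 hGblk with ⟨h, -⟩ | ⟨-, h | h⟩
        · exact absurd h hvF
        · exact ⟨false, h⟩
        · exact ⟨true, h⟩
      obtain ⟨b, hGb⟩ := hGcb
      have hvs : v ∉ s := fun h => hvF (hsF h)
      have hshP : s.image Sum.inl ∈ prefixFaces (L'.take m) :=
        mem_prefixFaces.2 ⟨G₀, hG₀, image_inl_subset_blk (hblkL' G₀ hG₀).1 hsG₀ hvs⟩
      have hshG : s.image Sum.inl ⊆ G := image_inl_subset_blk hGblk hsF hvs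
      obtain ⟨ts, hsub', htsP, htsG, htscard⟩ := hext' _ hshP hshG
      have hcardG : G.card = F.card + 1 := by rw [hGb, card_cb]
      have htsc : ts.card = F.card := by rw [htscard, hcardG]; omega
      have htscb : ts ⊆ cb b F := hGb ▸ htsG
      have hlptF : lpt ts ⊆ F := by
        have := lp_mono htscb
        rwa [lp_cb] at this
      have hst : s ⊆ lpt ts := by
        intro a ha
        exact mem_lp.2 (hsub' (mem_image_of_mem _ ha))
      by_cases hbt : Sum.inr b ∈ ts
      · have htseq : ts = insert (Sum.inr b) ((lpt ts).image Sum.inl) := by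
          apply Subset.antisymm
          · intro w hw
            cases w with
            | inl a => exact mem_insert_of_mem (mem_image_of_mem _ (mem_lp.2 hw))
            | inr b' =>
                have : b' = b := (subset_cb_iff.1 htscb).2 b' hw
                rw [this]
                exact mem_insert_self _ _
          · refine insert_subset hbt ?_
            intro w hw
            obtain ⟨a, ha, rfl⟩ := mem_image.1 hw
            exact mem_lp.1 ha
        have hcts : ts.card = (lpt ts).card + 1 := by
          conv_lhs => rw [htseq]
          rw [card_insert_of_notMem (by simp), card_image_of_injective _ Sum.inl_injective]
        have htP : lpt ts ∈ prefixFaces ((fdedup M).take k) := hdownK ts htsP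
        have heq : s = lpt ts :=
          hmax _ (mem_inter.2 ⟨htP, mem_powerset.2 hlptF⟩) hst
        rw [heq]
        omega
      · exfalso
        have htseq : ts = (lpt ts).image Sum.inl := by
          apply Subset.antisymm
          · intro w hw
            cases w with
            | inl a => exact mem_image_of_mem _ (mem_lp.2 hw)
            | inr b' =>
                have : b' = b := (subset_cb_iff.1 htscb).2 b' hw
                exact absurd (this ▸ hw) hbt
          · intro w hw
            obtain ⟨a, ha, rfl⟩ := mem_image.1 hw
            exact mem_lp.1 ha
        have hcts : ts.card = (lpt ts).card := by
          conv_lhs => rw [htseq]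
          rw [card_image_of_injective _ Sum.inl_injective]
        have hFeq : lpt ts = F := eq_of_subset_of_card_le hlptF (by omega)
        have hFP : F ∈ prefixFaces ((fdedup M).take k) := by
          have := hdownK ts htsP
          rwa [hFeq] at this
        obtain ⟨F₃, hF₃, hFF₃⟩ := mem_prefixFaces.1 hFP
        have hF₃M : F₃ ∈ M.take m := (htake F₃).1 hF₃
        have hF₃facet : F₃ ∈ facetsOf K := by
          rw [hMtake] at hF₃M
          obtain ⟨G₃, hG₃, rfl⟩ := List.mem_map.1 hF₃M
          exact (hblkL' G₃ hG₃).2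
        have : F = F₃ :=
          (mem_facetsOf.1 hFfacetK).2 F₃ (mem_facetsOf.1 hF₃facet).1 hFF₃
        exact hFnotin (this ▸ hF₃M)

end Reverse

/-- The one-point suspension `Susp₁(v,K)` is shellable iff `K` is.
Moreover, given a shelling `F₁, …, F_t` of `K`, replacing each facet `Fᵢ` not containing
`v` by the consecutive pair `v' ∗ Fᵢ`, `v'' ∗ Fᵢ` and each facet `Fⱼ` containing `v` by
`{v',v''} ∗ (Fⱼ ∖ {v})` yields a shelling of `Susp₁(v,K)`. -/
theorem susp_shellable (K : Finset (Finset V)) (v : V)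
    (hK : IsComplex K) (hv : {v} ∈ K) :
    (Shellable (susp v K) ↔ Shellable K) ∧
      ∀ L : List (Finset V), IsShelling L K →
        IsShelling
          (L.flatMap fun F =>
            if v ∈ F then
              [({Sum.inr false, Sum.inr true} : Finset (V ⊕ Bool)) ∪
                (F.erase v).image Sum.inl]
            else
              [insert (Sum.inr false) (F.image Sum.inl),
               insert (Sum.inr true) (F.image Sum.inl)])
          (susp v K) := by
  constructor
  · constructor
    · rintro ⟨L', hL'⟩
      exact ⟨_, reverse_shelling hK hv hL'⟩
    · rintro ⟨L, hL⟩
      exact ⟨_, forward_shelling hK hv hL⟩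
  · intro L hL
    exact forward_shelling hK hv hL
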